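/- Let A and B be disjoint nonempty sets with 0 ∉ A ∪ B, F_1 = F_{ξ1η1}[A] = (A*, R_1) and F_2 = F_{ξ2η2}[B] = (B*, R_2) tree frames. Define g on the product frame N_ω(F_1) × N_ω(F_2) by: for pseudo-infinite sequences α = x_1 x_2 … and β = y_1 y_2 …, g(α, β) is the finite sequence obtained by deleting all zeros from the interleaving x_1 y_1 x_2 y_2 …. Then g is a bounded morphism from the neighborhood 2-frame N_ω(F_1) × N_ω(F_2) onto the neighborhood 2-frame N(F_1 ⊗ F_2). -/

import Mathlib

set_option autoImplicit false

/-- Modal formulas with `n` modalities (propositional letters indexed by `ℕ`). -/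
inductive MFormula (n : ℕ) : Type
  | prop : ℕ → MFormula n
  | bot  : MFormula n
  | imp  : MFormula n → MFormula n → MFormula n
  | box  : Fin n → MFormula n → MFormula n

namespace MFormula

/-- Negation as an abbreviation: ¬φ := φ → ⊥. -/
def neg {n : ℕ} (φ : MFormula n) : MFormula n := φ.imp .bot

/-- Uniform substitution of formulas for propositional letters. -/
def subst {n : ℕ} (s : ℕ → MFormula n) : MFormula n → MFormula n
  | prop p  => s p
  | bot     => bot
  | imp φ ψ => imp (φ.subst s) (ψ.subst s)
  | box i φ => box i (φ.subst s)

end MFormula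

/-- A classical tautology: true under every boolean valuation of formulas
(a valuation respecting `⊥` and `→`, arbitrary on letters and boxed formulas). -/
def IsTautology {n : ℕ} (φ : MFormula n) : Prop :=
  ∀ v : MFormula n → Prop,
    ¬ v .bot → (∀ ψ χ : MFormula n, v (ψ.imp χ) ↔ (v ψ → v χ)) → v φ

/-- Normal modal logics with `n` modalities. -/
structure IsNormalLogic {n : ℕ} (L : Set (MFormula n)) : Prop where
  taut : ∀ φ : MFormula n, IsTautology φ → φ ∈ L
  kax : ∀ (i : Fin n) (p q : MFormula n),
    ((MFormula.box i (p.imp q)).imp ((MFormula.box i p).imp (MFormula.box i q))) ∈ L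
  mp : ∀ φ ψ : MFormula n, φ.imp ψ ∈ L → φ ∈ L → ψ ∈ L
  subst : ∀ (φ : MFormula n) (s : ℕ → MFormula n), φ ∈ L → φ.subst s ∈ L
  nec : ∀ (i : Fin n) (φ : MFormula n), φ ∈ L → MFormula.box i φ ∈ L

/-- The smallest normal logic containing `Γ`. -/
def NormalClosure {n : ℕ} (Γ : Set (MFormula n)) : Set (MFormula n) :=
  ⋂₀ {L : Set (MFormula n) | IsNormalLogic L ∧ Γ ⊆ L}

/-- The axiom □p → ¬□¬p. -/
def dAx : MFormula 1 :=
  (MFormula.box 0 (.prop 0)).imp (MFormula.neg (MFormula.box 0 (MFormula.neg (.prop 0))))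

/-- The axiom □p → p. -/
def tAx : MFormula 1 := (MFormula.box 0 (.prop 0)).imp (.prop 0)

/-- The axiom □p → □□p. -/
def fourAx : MFormula 1 :=
  (MFormula.box 0 (.prop 0)).imp (MFormula.box 0 (MFormula.box 0 (.prop 0)))

def LogicK : Set (MFormula 1) := NormalClosure ∅
def LogicD : Set (MFormula 1) := NormalClosure (LogicK ∪ {dAx})
def LogicT : Set (MFormula 1) := NormalClosure (LogicK ∪ {tAx})
def LogicD4 : Set (MFormula 1) := NormalClosure (LogicD ∪ {fourAx})
def LogicS4 : Set (MFormula 1) := NormalClosure (LogicT ∪ {fourAx})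

/-- Translation of a unimodal formula into the bimodal language, replacing □ by □_i. -/
def trTo (i : Fin 2) : MFormula 1 → MFormula 2
  | .prop p  => .prop p
  | .bot     => .bot
  | .imp φ ψ => .imp (trTo i φ) (trTo i ψ)
  | .box _ φ => .box i (trTo i φ)

/-- The fusion `L₁ ⊗ L₂` of two unimodal logics: the smallest bimodal normal logic
containing the translation of `L₁` (□ ↦ □₁) and of `L₂` (□ ↦ □₂). -/
def Fusion (L₁ L₂ : Set (MFormula 1)) : Set (MFormula 2) :=
  NormalClosure (trTo 0 '' L₁ ∪ trTo 1 '' L₂)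

/-- Truth in a Kripke model. -/
def kSat {n : ℕ} {W : Type} (R : Fin n → W → W → Prop) (V : ℕ → Set W) :
    W → MFormula n → Prop
  | w, .prop p  => w ∈ V p
  | _, .bot     => False
  | w, .imp φ ψ => kSat R V w φ → kSat R V w ψ
  | w, .box i φ => ∀ v : W, R i w v → kSat R V v φ

/-- The logic of a Kripke `n`-frame. -/
def KLogn {n : ℕ} {W : Type} [Nonempty W] (R : Fin n → W → W → Prop) :
    Set (MFormula n) :=
  {φ | ∀ (V : ℕ → Set W) (w : W), kSat R V w φ}

/-- The logic of a unimodal Kripke frame. -/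
def KLog {W : Type} [Nonempty W] (R : W → W → Prop) : Set (MFormula 1) :=
  KLogn (fun _ => R)

/-- The logic of a bimodal Kripke frame. -/
def KLog2 {W : Type} [Nonempty W] (R₁ R₂ : W → W → Prop) : Set (MFormula 2) :=
  KLogn ![R₁, R₂]

/-- Truth in a (monotone) neighborhood model: `x ⊨ □_i φ` iff the truth set of `φ`
belongs to the filter `τ i x`. -/
def nSat {n : ℕ} {X : Type} (τ : Fin n → X → Filter X) (V : ℕ → Set X) :
    X → MFormula n → Prop
  | x, .prop p  => x ∈ V p
  | _, .bot     => False
  | x, .imp φ ψ => nSat τ V x φ → nSat τ V x ψ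
  | x, .box i φ => {y | nSat τ V y φ} ∈ τ i x

/-- The logic of a neighborhood `n`-frame. -/
def NLogn {n : ℕ} {X : Type} [Nonempty X] (τ : Fin n → X → Filter X) :
    Set (MFormula n) :=
  {φ | ∀ (V : ℕ → Set X) (x : X), nSat τ V x φ}

/-- The logic of a unimodal neighborhood frame. -/
def NLog {X : Type} [Nonempty X] (τ : X → Filter X) : Set (MFormula 1) :=
  NLogn (fun _ => τ)

/-- The logic of a neighborhood 2-frame. -/
def NLog2 {X : Type} [Nonempty X] (τ₁ τ₂ : X → Filter X) : Set (MFormula 2) :=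
  NLogn ![τ₁, τ₂]

/-- Validity of a unimodal formula in a neighborhood frame. -/
def NValid {X : Type} (τ : X → Filter X) (φ : MFormula 1) : Prop :=
  ∀ (V : ℕ → Set X) (x : X), nSat (fun _ => τ) V x φ

/-- The neighborhood frame `N(F)` of a Kripke frame `F = (W, R)`:
`τ(w)` is the principal filter of `R(w)`. -/
def nOfK {W : Type} (R : W → W → Prop) (w : W) : Filter W :=
  Filter.principal {v | R w v}

/-- Bounded morphisms between neighborhood frames (with neighborhood functions
indexed by `ι`). -/
def IsNdMorphism {ι X Y : Type} (τ : ι → X → Filter X) (σ : ι → Y → Filter Y)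
    (f : X → Y) : Prop :=
  Function.Surjective f ∧
    ∀ (i : ι) (x : X),
      (∀ U ∈ τ i x, f '' U ∈ σ i (f x)) ∧
      (∀ V ∈ σ i (f x), ∃ U ∈ τ i x, f '' U ⊆ V)

/-- First neighborhood function of the product of two neighborhood frames:
`U ∈ τ'_1(x₁,x₂)` iff `∃ V ∈ τ₁ x₁, V × {x₂} ⊆ U`. -/
def prodTau1 {X₁ X₂ : Type} (τ₁ : X₁ → Filter X₁) (p : X₁ × X₂) :
    Filter (X₁ × X₂) :=
  (τ₁ p.1).map (fun x => (x, p.2))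

/-- Second neighborhood function of the product of two neighborhood frames:
`U ∈ τ'_2(x₁,x₂)` iff `∃ V ∈ τ₂ x₂, {x₁} × V ⊆ U`. -/
def prodTau2 {X₁ X₂ : Type} (τ₂ : X₂ → Filter X₂) (p : X₁ × X₂) :
    Filter (X₁ × X₂) :=
  (τ₂ p.2).map (fun y => (p.1, y))

/-- The successor relation on finite sequences: `a R b` iff `b = a·x` for some `x ∈ A`. -/
def sucRel (A : Type) (a b : List A) : Prop := ∃ x : A, b = a ++ [x]

/-- The four kinds of tree frames: irreflexive/reflexive, non-transitive/transitive. -/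
inductive TreeKind : Type
  | inn  -- irreflexive non-transitive: F_in
  | rn   -- reflexive non-transitive: F_rn (reflexive closure)
  | itr  -- irreflexive transitive: F_it (transitive closure)
  | rt   -- reflexive transitive: F_rt (reflexive-transitive closure)

/-- The relation of the tree frame `F_{ξη}[A]` on `A*`. -/
def treeRel (A : Type) : TreeKind → List A → List A → Prop
  | .inn => sucRel A
  | .rn  => fun a b => a = b ∨ sucRel A a b
  | .itr => Relation.TransGen (sucRel A)
  | .rt  => Relation.ReflTransGen (sucRel A)

/-- First relation of the product frame `F₁ ⊗ F₂` on `(A ⊔ B)*`: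
`x R'_1 y` iff `y = x·z` for some `z ∈ A*` with `Λ R₁ z`. -/
def prodRel1 (A B : Type) (k : TreeKind) (x y : List (A ⊕ B)) : Prop :=
  ∃ z : List A, treeRel A k [] z ∧ y = x ++ z.map Sum.inl

/-- Second relation of the product frame `F₁ ⊗ F₂` on `(A ⊔ B)*`. -/
def prodRel2 (A B : Type) (k : TreeKind) (x y : List (A ⊕ B)) : Prop :=
  ∃ z : List B, treeRel B k [] z ∧ y = x ++ z.map Sum.inr

/-- Pseudo-infinite sequences over `A ∪ {0}` (with `0` modelled by `none`, so
automatically `0 ∉ A`) that are eventually `0`. -/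
def PSeq (A : Type) : Type :=
  {α : ℕ → Option A // ∃ N, ∀ k ≥ N, α k = none}

instance {A : Type} : Nonempty (PSeq A) := ⟨⟨fun _ => none, 0, fun _ _ => rfl⟩⟩

/-- `st(α)`: the least `N` such that `α` has only zeros from position `N` on. -/
noncomputable def PSeq.st {A : Type} (α : PSeq A) : ℕ :=
  sInf {N | ∀ k ≥ N, α.1 k = none}

/-- `f_F(α)`: the finite sequence obtained from `α` by deleting all zeros. -/
noncomputable def PSeq.forget {A : Type} (α : PSeq A) : List A :=
  ((List.range α.st).map α.1).reduceOption

/-- The basic neighborhood `U_k(α)` of `α`, relative to the relation `R` on `A*`: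
`{β ∈ X : α|_m = β|_m and f_F(α) R f_F(β)}` where `m = max(k, st(α))`. -/
def Unbhd {A : Type} (R : List A → List A → Prop) (k : ℕ) (α : PSeq A) :
    Set (PSeq A) :=
  {β | (∀ i < max k α.st, α.1 i = β.1 i) ∧ R α.forget β.forget}

/-- The neighborhood function of `N_ω(F)`: `τ(α)` is the filter generated by the
base `{U_k(α) : k ∈ ℕ}`. -/
noncomputable def nOmega {A : Type} (R : List A → List A → Prop) (α : PSeq A) :
    Filter (PSeq A) :=
  ⨅ k : ℕ, Filter.principal (Unbhd R k α)

/-- The interleaving `x₁ y₁ x₂ y₂ …` of two pseudo-infinite sequences. -/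
def interleave {A B : Type} (α : PSeq A) (β : PSeq B) : PSeq (A ⊕ B) :=
  ⟨fun n => if n % 2 = 0 then (α.1 (n / 2)).map Sum.inl
            else (β.1 (n / 2)).map Sum.inr, by
    obtain ⟨N₁, h₁⟩ := α.2
    obtain ⟨N₂, h₂⟩ := β.2
    refine ⟨2 * max N₁ N₂, fun k hk => ?_⟩
    have hdiv : max N₁ N₂ ≤ k / 2 := by omega
    by_cases h : k % 2 = 0
    · simp [h, h₁ (k / 2) (le_trans (le_max_left _ _) hdiv)]
    · simp [h, h₂ (k / 2) (le_trans (le_max_right _ _) hdiv)]⟩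

/-- The map `g`: delete all zeros from the interleaving of `α` and `β`. -/
noncomputable def gMap {A B : Type} (p : PSeq A × PSeq B) : List (A ⊕ B) :=
  (interleave p.1 p.2).forget

/-!
Cutting a pseudo-infinite sequence at a position `M` beyond its support splits `f_F` into the
zero-deleted part before `M` and the zero-deleted tail. Hence, once `M` exceeds `st α` and
`st β`, changing `α` only from position `M` on changes `g(α, β)` by appending the new tail of `α`
(tagged `inl`): `β` contributes only zeros there. So the image of `U_k(α) × {β}` under `g` is
exactly the set of `R'_1`-successors of `g(α, β)` as soon as `k ≥ st β`, and for every `k` it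
contains that set (continue `α` by any `z` past `max k (st α) (st β)`). In filter language,
`g` maps `τ'_1(α, β)` onto the principal filter of `R'_1(g(α, β))`, which is exactly the
bounded-morphism condition; the second coordinate is symmetric. Surjectivity follows by
building a word letter by letter in the same way.
-/

theorem Filter.map_eq_iff_image {X Y : Type*} {l : Filter X} {l' : Filter Y} {f : X → Y} :
    l.map f = l' ↔ (∀ U ∈ l, f '' U ∈ l') ∧ ∀ V ∈ l', ∃ U ∈ l, f '' U ⊆ V := by
  rw [le_antisymm_iff, and_comm, Filter.le_map_iff, Filter.le_def]
  simp only [Filter.mem_map_iff_exists_image]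

theorem isNdMorphism_iff {ι X Y : Type} (τ : ι → X → Filter X) (σ : ι → Y → Filter Y)
    (f : X → Y) :
    IsNdMorphism τ σ f ↔ Function.Surjective f ∧ ∀ i x, (τ i x).map f = σ i (f x) := by
  simp only [IsNdMorphism, Filter.map_eq_iff_image]

theorem List.reduceOption_map_range_add {C : Type*} (f : ℕ → Option C) (M N : ℕ) :
    ((List.range (M + N)).map f).reduceOption =
      ((List.range M).map f).reduceOption ++
        ((List.range N).map fun i => f (M + i)).reduceOption := by
  rw [List.range_add, List.map_append, List.reduceOption_append, List.map_map]
  rfl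

namespace PSeq

variable {A : Type}

theorem st_le_of_forall {α : PSeq A} {N : ℕ} (h : ∀ k ≥ N, α.1 k = none) : α.st ≤ N :=
  Nat.sInf_le h

theorem apply_eq_none_of_st_le {α : PSeq A} {k : ℕ} (h : α.st ≤ k) : α.1 k = none :=
  Nat.sInf_mem (s := {N | ∀ k ≥ N, α.1 k = none}) α.2 k h

theorem forget_eq_reduceOption_range {α : PSeq A} {N : ℕ} (h : ∀ k ≥ N, α.1 k = none) :
    α.forget = ((List.range N).map α.1).reduceOption := by
  rw [forget, ← Nat.add_sub_of_le (st_le_of_forall h), List.reduceOption_map_range_add]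
  suffices htail : ((List.range (N - α.st)).map fun i => α.1 (α.st + i)).reduceOption = [] by
    rw [htail, List.append_nil]
  rw [List.reduceOption, List.filterMap_eq_nil_iff]
  simp only [List.mem_map, List.mem_range]
  rintro _ ⟨i, -, rfl⟩
  exact apply_eq_none_of_st_le (by omega)

def shift (α : PSeq A) (M : ℕ) : PSeq A :=
  ⟨fun i => α.1 (M + i), α.st, fun _ hk => apply_eq_none_of_st_le (by omega)⟩

@[simp]
theorem shift_apply (α : PSeq A) (M i : ℕ) : (α.shift M).1 i = α.1 (M + i) := rfl

theorem forget_eq_append_forget_shift (α : PSeq A) (M : ℕ) :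
    α.forget = ((List.range M).map α.1).reduceOption ++ (α.shift M).forget := by
  rw [forget_eq_reduceOption_range (N := M + α.st) fun _ hk => apply_eq_none_of_st_le (by omega),
    List.reduceOption_map_range_add,
    forget_eq_reduceOption_range (α := α.shift M) (N := α.st)
      fun k hk => show α.1 (M + k) = none from apply_eq_none_of_st_le (by omega)]
  rfl

theorem forget_eq_append_of_eqOn {α α' : PSeq A} {M : ℕ} (hα : α.st ≤ M)
    (hagree : ∀ i < M, α.1 i = α'.1 i) : α'.forget = α.forget ++ (α'.shift M).forget := by
  rw [forget_eq_append_forget_shift α' M,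
    forget_eq_reduceOption_range fun k hk => apply_eq_none_of_st_le (hα.trans hk)]
  congr 2
  exact List.map_congr_left fun i hi => (hagree i (List.mem_range.1 hi)).symm

def ofList (z : List A) : PSeq A :=
  ⟨fun i => z[i]?, z.length, fun _ hk => List.getElem?_eq_none hk⟩

theorem forget_ofList (z : List A) : (ofList z).forget = z := by
  induction z with
  | nil => exact forget_eq_reduceOption_range (N := 0) fun _ _ => rfl
  | cons a z ih =>
    rw [forget_eq_append_forget_shift _ 1]
    have hshift : (ofList (a :: z)).shift 1 = ofList z := by
      apply Subtype.ext; funext i; rw [shift_apply, add_comm]; rfl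
    rw [hshift, ih]; rfl

def extend (α : PSeq A) (M : ℕ) (z : List A) : PSeq A :=
  ⟨fun i => if i < M then α.1 i else z[i - M]?, M + z.length, fun k hk => by
    simp only [show ¬ k < M by omega, if_false]
    exact List.getElem?_eq_none (by omega)⟩

theorem extend_apply_of_lt (α : PSeq A) {M i : ℕ} (z : List A) (h : i < M) :
    (α.extend M z).1 i = α.1 i := if_pos h

theorem shift_extend (α : PSeq A) (M : ℕ) (z : List A) :
    (α.extend M z).shift M = ofList z := by
  apply Subtype.ext; funext i; rw [shift_apply]; simp [extend, ofList]

end PSeq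

section TreeRel

variable {A : Type}

theorem reflTransGen_sucRel_iff {a b : List A} :
    Relation.ReflTransGen (sucRel A) a b ↔ a <+: b := by
  constructor
  · intro h
    induction h with
    | refl => exact List.prefix_refl a
    | tail _ hstep ih =>
      obtain ⟨x, rfl⟩ := hstep
      exact ih.trans (List.prefix_append _ _)
  · rintro ⟨z, rfl⟩
    induction z generalizing a with
    | nil => rw [List.append_nil]
    | cons x z ih =>
      rw [← List.singleton_append, ← List.append_assoc]
      exact .head ⟨x, rfl⟩ ih

theorem transGen_sucRel_iff {a b : List A} :
    Relation.TransGen (sucRel A) a b ↔ ∃ x, a ++ [x] <+: b := by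
  simp [Relation.TransGen.head'_iff, reflTransGen_sucRel_iff, sucRel]

theorem treeRel_append_iff {k : TreeKind} {a z : List A} :
    treeRel A k a (a ++ z) ↔ treeRel A k [] z := by
  cases k <;> simp [treeRel, sucRel, reflTransGen_sucRel_iff, transGen_sucRel_iff, eq_comm]

end TreeRel

section Interleave

variable {A B : Type}

open PSeq

@[simp]
theorem interleave_apply (α : PSeq A) (β : PSeq B) (n : ℕ) :
    (interleave α β).1 n =
      if n % 2 = 0 then (α.1 (n / 2)).map Sum.inl else (β.1 (n / 2)).map Sum.inr := rfl

theorem shift_interleave (α : PSeq A) (β : PSeq B) (M : ℕ) :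
    (interleave α β).shift (2 * M) = interleave (α.shift M) (β.shift M) := by
  apply Subtype.ext; funext n
  simp only [shift_apply, interleave_apply]
  rw [show (2 * M + n) % 2 = n % 2 by omega, show (2 * M + n) / 2 = M + n / 2 by omega]

theorem interleave_apply_eq_none {α : PSeq A} {β : PSeq B} {M : ℕ} (hα : α.st ≤ M)
    (hβ : β.st ≤ M) {k : ℕ} (hk : 2 * M ≤ k) : (interleave α β).1 k = none := by
  rw [interleave_apply, apply_eq_none_of_st_le (α := α) (by omega),
    apply_eq_none_of_st_le (α := β) (by omega)]
  simp

theorem gMap_eq_forget (α : PSeq A) (β : PSeq B) : gMap (α, β) = (interleave α β).forget := rfl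

theorem gMap_eq_append_gMap_shift (α : PSeq A) (β : PSeq B) (M : ℕ) :
    gMap (α, β) =
      ((List.range (2 * M)).map (interleave α β).1).reduceOption ++
        gMap (α.shift M, β.shift M) := by
  rw [gMap_eq_forget, gMap_eq_forget, ← shift_interleave]
  exact forget_eq_append_forget_shift _ _

theorem gMap_eq_append_of_eqOn {α α' : PSeq A} {β β' : PSeq B} {M : ℕ} (hα : α.st ≤ M)
    (hβ : β.st ≤ M) (hαα' : ∀ i < M, α.1 i = α'.1 i) (hββ' : ∀ i < M, β.1 i = β'.1 i) :
    gMap (α', β') = gMap (α, β) ++ gMap (α'.shift M, β'.shift M) := by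
  rw [gMap_eq_append_gMap_shift α' β' M, gMap_eq_forget α β,
    forget_eq_reduceOption_range fun k hk => interleave_apply_eq_none hα hβ hk]
  congr 2
  refine List.map_congr_left fun n hn => ?_
  have hn : n / 2 < M := by have := List.mem_range.1 hn; omega
  simp [hαα' _ hn, hββ' _ hn]

theorem gMap_eq_map_inl_forget {α : PSeq A} {β : PSeq B} (hβ : ∀ k, β.1 k = none) :
    gMap (α, β) = α.forget.map Sum.inl := by
  obtain ⟨N, hN⟩ : ∃ N, α.st ≤ N := ⟨_, le_rfl⟩
  induction N generalizing α β with
  | zero =>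
    rw [gMap_eq_forget, forget_eq_reduceOption_range (N := 0) fun k _ =>
        interleave_apply_eq_none hN (st_le_of_forall fun k _ => hβ k) (by omega),
      forget_eq_reduceOption_range (N := 0) fun k _ => apply_eq_none_of_st_le (by omega)]
    rfl
  | succ N ih =>
    rw [gMap_eq_append_gMap_shift α β 1, forget_eq_append_forget_shift α 1, List.map_append,
      ih (fun k => hβ (1 + k))
        (st_le_of_forall fun k hk =>
          show α.1 (1 + k) = none from apply_eq_none_of_st_le (by omega))]
    cases h : α.1 0 <;> simp [List.range_succ, hβ, h]

theorem gMap_eq_map_inr_forget {α : PSeq A} {β : PSeq B} (hα : ∀ k, α.1 k = none) :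
    gMap (α, β) = β.forget.map Sum.inr := by
  obtain ⟨N, hN⟩ : ∃ N, β.st ≤ N := ⟨_, le_rfl⟩
  induction N generalizing α β with
  | zero =>
    rw [gMap_eq_forget, forget_eq_reduceOption_range (N := 0) fun k _ =>
        interleave_apply_eq_none (st_le_of_forall fun k _ => hα k) hN (by omega),
      forget_eq_reduceOption_range (N := 0) fun k _ => apply_eq_none_of_st_le (by omega)]
    rfl
  | succ N ih =>
    rw [gMap_eq_append_gMap_shift α β 1, forget_eq_append_forget_shift β 1, List.map_append,
      ih (fun k => hα (1 + k))
        (st_le_of_forall fun k hk =>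
          show β.1 (1 + k) = none from apply_eq_none_of_st_le (by omega))]
    cases h : β.1 0 <;> simp [List.range_succ, hα, h]

theorem gMap_eq_append_of_eqOn_left {α α' : PSeq A} {β : PSeq B} {M : ℕ} (hα : α.st ≤ M)
    (hβ : β.st ≤ M) (hagree : ∀ i < M, α.1 i = α'.1 i) :
    gMap (α', β) = gMap (α, β) ++ (α'.shift M).forget.map Sum.inl := by
  rw [gMap_eq_append_of_eqOn hα hβ hagree fun _ _ => rfl,
    gMap_eq_map_inl_forget (β := β.shift M) fun k =>
      show β.1 (M + k) = none from apply_eq_none_of_st_le (by omega)]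

theorem gMap_eq_append_of_eqOn_right {α : PSeq A} {β β' : PSeq B} {M : ℕ} (hα : α.st ≤ M)
    (hβ : β.st ≤ M) (hagree : ∀ i < M, β.1 i = β'.1 i) :
    gMap (α, β') = gMap (α, β) ++ (β'.shift M).forget.map Sum.inr := by
  rw [gMap_eq_append_of_eqOn hα hβ (fun _ _ => rfl) hagree,
    gMap_eq_map_inr_forget (α := α.shift M) fun k =>
      show α.1 (M + k) = none from apply_eq_none_of_st_le (by omega)]

theorem gMap_surjective : Function.Surjective (gMap : PSeq A × PSeq B → List (A ⊕ B)) := by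
  intro w
  induction w using List.reverseRecOn with
  | nil =>
    refine ⟨(ofList [], ofList []), ?_⟩
    rw [gMap_eq_map_inl_forget fun _ => rfl, forget_ofList]
    rfl
  | append_singleton w c ih =>
    obtain ⟨⟨α, β⟩, rfl⟩ := ih
    have hα : α.st ≤ max α.st β.st := le_max_left _ _
    have hβ : β.st ≤ max α.st β.st := le_max_right _ _
    cases c with
    | inl a =>
      refine ⟨(α.extend (max α.st β.st) [a], β), ?_⟩
      rw [gMap_eq_append_of_eqOn_left hα hβ fun i hi => (extend_apply_of_lt α _ hi).symm,
        shift_extend, forget_ofList]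
      rfl
    | inr b =>
      refine ⟨(α, β.extend (max α.st β.st) [b]), ?_⟩
      rw [gMap_eq_append_of_eqOn_right hα hβ fun i hi => (extend_apply_of_lt β _ hi).symm,
        shift_extend, forget_ofList]
      rfl

end Interleave


section NOmega

variable {A : Type}

open PSeq

theorem antitone_Unbhd (R : List A → List A → Prop) (α : PSeq A) :
    Antitone fun k => Unbhd R k α :=
  fun _ _ hkl _ ⟨hagree, hR⟩ =>
    ⟨fun i hi => hagree i (hi.trans_le (max_le_max_right _ hkl)), hR⟩

theorem hasAntitoneBasis_nOmega (R : List A → List A → Prop) (α : PSeq A) :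
    (nOmega R α).HasAntitoneBasis (Unbhd R · α) :=
  .iInf_principal (antitone_Unbhd R α)

theorem map_nOmega_treeRel {C : Type} (k : TreeKind) (α : PSeq A) (g : PSeq A → List C)
    (ι : A → C) (M₀ : ℕ)
    (hg : ∀ α' M, M₀ ≤ M → α.st ≤ M → (∀ i < M, α.1 i = α'.1 i) →
      g α' = g α ++ (α'.shift M).forget.map ι) :
    (nOmega (treeRel A k) α).map g =
      Filter.principal {v | ∃ z, treeRel A k [] z ∧ v = g α ++ z.map ι} := by
  have hbasis := ((hasAntitoneBasis_nOmega (treeRel A k) α).map g).toHasBasis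
  apply le_antisymm
  · refine Filter.le_principal_iff.2 (hbasis.mem_iff.2 ⟨M₀, trivial, ?_⟩)
    rintro _ ⟨α', ⟨hagree, hrel⟩, rfl⟩
    rw [forget_eq_append_of_eqOn (le_max_right _ _) hagree, treeRel_append_iff] at hrel
    exact ⟨_, hrel, hg α' _ (le_max_left _ _) (le_max_right _ _) hagree⟩
  · refine hbasis.ge_iff.2 fun k₀ _ => Filter.mem_principal.2 ?_
    rintro _ ⟨z, hz, rfl⟩
    set M := max (max k₀ α.st) M₀
    have hagree : ∀ i < M, α.1 i = (α.extend M z).1 i :=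
      fun i hi => (extend_apply_of_lt α z hi).symm
    have hshift : ((α.extend M z).shift M).forget = z := by rw [shift_extend, forget_ofList]
    refine ⟨α.extend M z, ⟨fun i hi => hagree i (by omega), ?_⟩, ?_⟩
    · rw [forget_eq_append_of_eqOn (by omega) hagree, hshift, treeRel_append_iff]
      exact hz
    · rw [hg _ M (by omega) (by omega) hagree, hshift]

end NOmega

theorem gMap_boundedMorphism_general (A B : Type) (k₁ k₂ : TreeKind) :
    IsNdMorphism
      ![prodTau1 (nOmega (treeRel A k₁)), prodTau2 (nOmega (treeRel B k₂))]
      ![nOfK (prodRel1 A B k₁), nOfK (prodRel2 A B k₂)]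
      gMap := by
  refine (isNdMorphism_iff _ _ _).2 ⟨gMap_surjective, fun i ⟨α, β⟩ => ?_⟩
  fin_cases i
  · exact (Filter.map_map ..).trans <| map_nOmega_treeRel k₁ α (fun α' => gMap (α', β)) Sum.inl
      β.st fun α' M hβ hα hagree => gMap_eq_append_of_eqOn_left hα hβ hagree
  · exact (Filter.map_map ..).trans <| map_nOmega_treeRel k₂ β (fun β' => gMap (α, β')) Sum.inr
      α.st fun β' M hα hβ hagree => gMap_eq_append_of_eqOn_right hα hβ hagree

/-- The zero-deleting interleaving map `g` is a bounded morphism from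
the neighborhood 2-frame `N_ω(F₁) × N_ω(F₂)` onto the neighborhood 2-frame
`N(F₁ ⊗ F₂)`. -/
theorem gMap_boundedMorphism (A B : Type) [Nonempty A] [Nonempty B]
    (k₁ k₂ : TreeKind) :
    IsNdMorphism
      ![prodTau1 (nOmega (treeRel A k₁)), prodTau2 (nOmega (treeRel B k₂))]
      ![nOfK (prodRel1 A B k₁), nOfK (prodRel2 A B k₂)]
      gMap :=
  gMap_boundedMorphism_general A B k₁ k₂
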